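/- Let G be a simple graph with minimum degree at least 3, let E be a set of edges of G containing at most t' independent edges, and let C be a chordless cycle of G with special vertex v such that for all but at most 4 non-special vertices of C, every edge of G not in C incident to that vertex belongs to E. If l(C) > t' + 6, then G contains a chordless cycle C' with a special vertex such that l(C') ≤ t' + 6 and h(C') ≤ h(C). -/

import Mathlib

/-- A multigraph: a type of vertices, a type of edges, and an incidence map
assigning to each edge its (unordered) pair of endvertices. -/
structure Multigraph where
  V : Type
  E : Type
  ends : E → Sym2 V

namespace Multigraph

/-- A drawing of a multigraph in the plane: vertices are mapped to distinct
points, each edge is drawn as a simple arc joining the images of its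
endvertices, and the interior of every arc avoids the vertex points. -/
structure Drawing (G : Multigraph) where
  vmap : G.V → ℝ × ℝ
  vmap_inj : Function.Injective vmap
  arc : G.E → unitInterval → ℝ × ℝ
  arc_cont : ∀ e, Continuous (arc e)
  arc_inj : ∀ e (s t : unitInterval), arc e s = arc e t →
      s = t ∨ (s = 0 ∧ t = 1) ∨ (s = 1 ∧ t = 0)
  arc_ends : ∀ e, Sym2.map vmap (G.ends e) = s(arc e 0, arc e 1)
  arc_int : ∀ e (t : unitInterval), t ≠ 0 → t ≠ 1 → arc e t ∉ Set.range vmap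

/-- The point `p` is an interior point of the arc drawn for edge `e`. -/
def Drawing.OnEdge {G : Multigraph} (D : G.Drawing) (e : G.E) (p : ℝ × ℝ) : Prop :=
  ∃ t : unitInterval, t ≠ 0 ∧ t ≠ 1 ∧ D.arc e t = p

/-- The set of crossing points of a drawing: points interior to the arcs of
two distinct edges. -/
def Drawing.crossings {G : Multigraph} (D : G.Drawing) : Set (ℝ × ℝ) :=
  {p | ∃ e f : G.E, e ≠ f ∧ D.OnEdge e p ∧ D.OnEdge f p}

/-- The crossing number: the minimum number of crossings over all drawings
(with finitely many crossings). -/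
noncomputable def crossingNumber (G : Multigraph) : ℕ :=
  sInf {n : ℕ | ∃ D : G.Drawing, D.crossings.Finite ∧ D.crossings.ncard = n}

/-- A multigraph is planar if it has a drawing with no crossings. -/
def Planar (G : Multigraph) : Prop := ∃ D : G.Drawing, D.crossings = ∅

/-- Delete a single edge of a multigraph. -/
def deleteEdge (G : Multigraph) (e : G.E) : Multigraph :=
  ⟨G.V, {f : G.E // f ≠ e}, fun f => G.ends f.1⟩

/-- Delete a set of edges of a multigraph. -/
def deleteEdges (G : Multigraph) (S : Set G.E) : Multigraph :=
  ⟨G.V, {f : G.E // f ∉ S}, fun f => G.ends f.1⟩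

/-- `G` is `k`-crossing-critical: `cr(G) ≥ k`, but deleting any edge makes the
crossing number drop below `k`. -/
def CrossingCritical (k : ℕ) (G : Multigraph) : Prop :=
  k ≤ G.crossingNumber ∧ ∀ e : G.E, (G.deleteEdge e).crossingNumber < k

end Multigraph

/-- The multigraph associated to a simple graph. -/
def SimpleGraph.toMultigraph {V : Type} (G : SimpleGraph V) : Multigraph :=
  ⟨V, G.edgeSet, fun e => (e : Sym2 V)⟩

/-- Crossing number of a simple graph. -/
noncomputable def crSG {V : Type} (G : SimpleGraph V) : ℕ :=
  G.toMultigraph.crossingNumber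

/-- Planarity of a simple graph. -/
def PlanarSG {V : Type} (G : SimpleGraph V) : Prop := G.toMultigraph.Planar

/-- A simple graph is `k`-crossing-critical. -/
def SCrossingCritical {V : Type} (k : ℕ) (G : SimpleGraph V) : Prop :=
  k ≤ crSG G ∧ ∀ e ∈ G.edgeSet, crSG (G.deleteEdges {e}) < k

/-- Degree of a vertex in a simple graph. -/
noncomputable def deg {V : Type} (G : SimpleGraph V) (u : V) : ℕ :=
  (G.neighborSet u).ncard

/-- For a cycle `C` (a closed walk based at its special vertex `v`),
`hval G C = Σ_{u ∈ C, u ≠ v} (d(u) - 2)`, the number of hanging edges at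
non-special vertices of `C`. -/
noncomputable def hval {V : Type} [DecidableEq V] (G : SimpleGraph V) {v : V}
    (C : G.Walk v v) : ℕ :=
  ∑ u ∈ C.support.toFinset.erase v, (deg G u - 2)

/-- `e` is a chord of the cycle `C`: an edge of `G` not on `C` with both
endvertices on `C`. -/
def IsChord {V : Type} (G : SimpleGraph V) {v : V} (C : G.Walk v v)
    (e : Sym2 V) : Prop :=
  e ∈ G.edgeSet ∧ e ∉ C.edges ∧ ∀ x ∈ e, x ∈ C.support

/-- The cycle `C` has no chord. -/
def Chordless {V : Type} (G : SimpleGraph V) {v : V} (C : G.Walk v v) : Prop :=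
  ∀ e : Sym2 V, ¬ IsChord G C e

/-- A set of edges is independent if no two of them share an endvertex. -/
def IndepEdges {V : Type} (M : Finset (Sym2 V)) : Prop :=
  ∀ e ∈ M, ∀ f ∈ M, e ≠ f → ∀ x : V, x ∈ e → x ∉ f

/-- `(x, y)` is admissible for `G`: there is a set `E` of `x` edges whose
removal makes `G` planar, such that `E` contains at most `y` independent
edges. -/
def PlanarizingPair {V : Type} [DecidableEq V] (G : SimpleGraph V)
    (x y : ℕ) : Prop :=
  ∃ E : Finset (Sym2 V), ↑E ⊆ G.edgeSet ∧ E.card = x ∧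
    PlanarSG (G.deleteEdges ↑E) ∧ ∀ M ⊆ E, IndepEdges M → M.card ≤ y

/-!
Take a window `P` of `t' + 5` consecutive non-special vertices of `C`; as `C` is chordless, `P`
is an induced path. Every vertex has degree at least 3, so each window vertex has a hanging edge,
whose other end lies off `C` (no chords); for all but at most 4 window vertices that edge is in `E`.
These `t' + 1` edges of `E` cannot be independent, so two window vertices have a common neighbour
`w` off `C`. Between two consecutive neighbours of `w` on `P`, the segment of `P` closes up through
`w` into a chordless cycle of length at most `t' + 6`, all of whose vertices other than `w` are
non-special vertices of `C`; hence its `h` is at most `h(C)`.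
-/

namespace SimpleGraph.Walk

variable {V : Type*} {G : SimpleGraph V}

def IsInduced {u v : V} (p : G.Walk u v) : Prop :=
  ∀ ⦃x y⦄, x ∈ p.support → y ∈ p.support → G.Adj x y → s(x, y) ∈ p.edges

theorem IsPath.eq_of_mem_support_append {u v w x : V} {p₁ : G.Walk u v} {p₂ : G.Walk v w}
    (h : (p₁.append p₂).IsPath) (hx₁ : x ∈ p₁.support) (hx₂ : x ∈ p₂.support) :
    x = v := by
  have hnd := h.support_nodup
  rw [support_append] at hnd
  rw [← cons_tail_support, List.mem_cons] at hx₂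
  exact hx₂.resolve_right (List.disjoint_of_nodup_append hnd hx₁)

theorem IsPath.mem_edges_of_isSubwalk {u v u' v' x y : V} {p : G.Walk u v} {q : G.Walk u' v'}
    (hp : p.IsPath) (hq : q.IsSubwalk p) (hx : x ∈ q.support) (hy : y ∈ q.support)
    (he : s(x, y) ∈ p.edges) : s(x, y) ∈ q.edges := by
  obtain ⟨r₁, r₂, rfl⟩ := hq
  have hxy : x ≠ y := (adj_of_mem_edges _ he).ne
  simp only [edges_append, List.mem_append] at he
  rcases he with (he | he) | he
  · have h₁ := hp.of_append_left
    exact absurd ((h₁.eq_of_mem_support_append (fst_mem_support_of_mem_edges _ he) hx).trans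
      (h₁.eq_of_mem_support_append (snd_mem_support_of_mem_edges _ he) hy).symm) hxy
  · exact he
  · have hmem {z : V} (hz : z ∈ q.support) : z ∈ (r₁.append q).support :=
      (mem_support_append_iff _ _).mpr (Or.inr hz)
    exact absurd ((hp.eq_of_mem_support_append (hmem hx) (fst_mem_support_of_mem_edges _ he)).trans
      (hp.eq_of_mem_support_append (hmem hy) (snd_mem_support_of_mem_edges _ he)).symm) hxy

theorem IsInduced.of_isSubwalk {u v u' v' : V} {p : G.Walk u v} {q : G.Walk u' v'}
    (hind : p.IsInduced) (hp : p.IsPath) (hq : q.IsSubwalk p) : q.IsInduced :=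
  fun _ _ hx hy hxy => hp.mem_edges_of_isSubwalk hq hx hy
    (hind (hq.support_subset hx) (hq.support_subset hy) hxy)

theorem IsPath.notMem_support_take {u v : V} {p : G.Walk u v} (hp : p.IsPath) {n : ℕ}
    (hn : n < p.length) : v ∉ (p.take n).support := by
  rw [mem_support_iff_exists_getVert]
  rintro ⟨m, hm, hml⟩
  rw [take_getVert] at hm
  rw [take_length] at hml
  have := hp.getVert_injOn (by simp; omega) (by simp) (hm.trans p.getVert_length.symm)
  omega

theorem exists_isSubwalk_of_mem_support {u v x y : V} {p : G.Walk u v}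
    (hx : x ∈ p.support) (hy : y ∈ p.support) :
    ∃ q : G.Walk x y, q.IsSubwalk p ∨ q.reverse.IsSubwalk p := by
  classical
  by_cases hy' : y ∈ (p.dropUntil x hx).support
  · exact ⟨_, .inl ((isSubwalk_takeUntil _ hy').trans (isSubwalk_dropUntil _ hx))⟩
  · have hy'' : y ∈ (p.takeUntil x hx).support := by
      rw [← p.take_spec hx, mem_support_append_iff] at hy
      exact hy.resolve_right hy'
    refine ⟨((p.takeUntil x hx).dropUntil y hy'').reverse, .inr ?_⟩
    rw [reverse_reverse]
    exact (isSubwalk_dropUntil _ hy'').trans (isSubwalk_takeUntil _ hx)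

theorem IsCycle.exists_adj_notMem_support {v u : V} {C : G.Walk v v} (hC : C.IsCycle)
    (hind : C.IsInduced) (hu : u ∈ C.support) (hdeg : 3 ≤ (G.neighborSet u).ncard) :
    ∃ y, G.Adj u y ∧ s(u, y) ∉ C.edges ∧ y ∉ C.support := by
  have hnsub : ¬ G.neighborSet u ⊆ C.toSubgraph.neighborSet u := fun hsub => by
    have := Set.ncard_le_ncard hsub (C.finite_neighborSet_toSubgraph)
    rw [hC.ncard_neighborSet_toSubgraph_eq_two hu] at this
    omega
  obtain ⟨y, hy, hyC⟩ := Set.not_subset.mp hnsub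
  have hyC : s(u, y) ∉ C.edges := fun he => hyC (adj_toSubgraph_iff_mem_edges.mpr he)
  exact ⟨y, hy, hyC, fun hyS => hyC (hind hu hyS hy)⟩

theorem IsCycle.exists_isInduced_isPath {v : V} {C : G.Walk v v} (hC : C.IsCycle)
    (hind : C.IsInduced) {n : ℕ} (hn : n + 1 < C.length) :
    ∃ (a b : V) (P : G.Walk a b), P.IsPath ∧ P.IsInduced ∧ P.length = n ∧
      P.support ⊆ C.support ∧ v ∉ P.support := by
  -- The window is an initial segment of the path `p = C.tail`; the one edge of `C` missing from
  -- `p` ends at `v`, which the window avoids.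
  cases C with
  | nil => simp at hn
  | cons h p =>
    have hp := ((cons_isCycle_iff p h).mp hC).1
    rw [length_cons] at hn
    have hvP := hp.notMem_support_take (n := n) (by omega)
    have hPC : (p.take n).support ⊆ (cons h p).support :=
      List.Subset.trans (isSubwalk_take p n).support_subset (List.subset_cons_self _ _)
    refine ⟨_, _, p.take n, hp.take n, fun x y hx hy hxy => ?_, by simp; omega, hPC, hvP⟩
    rcases List.mem_cons.mp (hind (hPC hx) (hPC hy) hxy) with he | he
    · rcases Sym2.eq_iff.mp he with ⟨rfl, -⟩ | ⟨-, rfl⟩ <;> contradiction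
    · exact hp.mem_edges_of_isSubwalk (isSubwalk_take p n) hx hy he

section ConsConcat

variable {a b w : V} {P : G.Walk a b}

theorem IsPath.isCycle_cons_concat (hP : P.IsPath) (hab : a ≠ b) (hw : w ∉ P.support)
    (hwa : G.Adj w a) (hbw : G.Adj b w) : (cons hwa (P.concat hbw)).IsCycle := by
  refine (cons_isCycle_iff _ _).mpr ⟨hP.concat hw hbw, fun he => ?_⟩
  rw [edges_concat, List.concat_eq_append, List.mem_append, List.mem_singleton] at he
  rcases he with he | he
  · exact hw (fst_mem_support_of_mem_edges _ he)
  · rcases Sym2.eq_iff.mp he with ⟨rfl, -⟩ | ⟨-, rfl⟩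
    exacts [hw P.end_mem_support, hab rfl]

theorem IsInduced.cons_concat (hind : P.IsInduced) (hwa : G.Adj w a) (hbw : G.Adj b w)
    (hnbr : ∀ z ∈ P.support, G.Adj w z → z = a ∨ z = b) :
    (cons hwa (P.concat hbw)).IsInduced := by
  have hw {z : V} (hz : z ∈ P.support) (hwz : G.Adj w z) :
      s(w, z) ∈ (cons hwa (P.concat hbw)).edges := by
    rcases hnbr z hz hwz with rfl | rfl <;> simp [edges_concat, Sym2.eq_swap]
  have hmem {z : V} (hz : z ∈ (cons hwa (P.concat hbw)).support) : z = w ∨ z ∈ P.support := by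
    simp only [support_cons, support_concat, List.mem_cons, List.mem_append] at hz
    tauto
  intro x y hx hy hxy
  rcases hmem hx with rfl | hxP <;> rcases hmem hy with rfl | hyP
  · exact (G.irrefl hxy).elim
  · exact hw hyP hxy
  · rw [Sym2.eq_swap]
    exact hw hxP hxy.symm
  · simp [edges_concat, hind hxP hyP hxy]

end ConsConcat

theorem IsPath.exists_isInduced_isCycle_of_isSubwalk {a b c d w : V} {P : G.Walk a b}
    (hP : P.IsPath) (hind : P.IsInduced) (hw : w ∉ P.support) {q : G.Walk c d}
    (hq : q.IsSubwalk P) (hcd : c ≠ d) (hwc : G.Adj w c) (hwd : G.Adj w d) :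
    ∃ C : G.Walk w w, C.IsCycle ∧ C.IsInduced ∧ C.length ≤ P.length + 2 ∧
      C.support ⊆ w :: P.support := by
  classical
  induction hn : q.length using Nat.strong_induction_on generalizing d with
  | _ n ih =>
  by_cases hz : ∃ z ∈ q.support, z ≠ c ∧ z ≠ d ∧ G.Adj w z
  · obtain ⟨z, hz, hzc, hzd, hwz⟩ := hz
    exact ih _ (hn ▸ length_takeUntil_lt_length hz hzd) ((isSubwalk_takeUntil q hz).trans hq)
      hzc.symm hwz rfl
  · push Not at hz
    have hqP := hq.support_subset
    refine ⟨cons hwc (q.concat hwd.symm),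
      (isPath_of_isSubwalk hq hP).isCycle_cons_concat hcd (fun h => hw (hqP h)) hwc hwd.symm,
      (hind.of_isSubwalk hP hq).cons_concat hwc hwd.symm fun z hz' hwz => ?_, ?_, ?_⟩
    · by_contra! h
      exact hz z hz' h.1 h.2 hwz
    · simpa using length_le_of_isSubwalk hq
    · intro z hz'
      simp only [support_cons, support_concat, List.mem_cons, List.mem_append] at hz' ⊢
      tauto

theorem IsPath.exists_isInduced_isCycle_of_adj {a b w x y : V} {P : G.Walk a b}
    (hP : P.IsPath) (hind : P.IsInduced) (hw : w ∉ P.support) (hx : x ∈ P.support)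
    (hy : y ∈ P.support) (hxy : x ≠ y) (hwx : G.Adj w x) (hwy : G.Adj w y) :
    ∃ C : G.Walk w w, C.IsCycle ∧ C.IsInduced ∧ C.length ≤ P.length + 2 ∧
      C.support ⊆ w :: P.support := by
  obtain ⟨q, hq | hq⟩ := exists_isSubwalk_of_mem_support hx hy
  · exact hP.exists_isInduced_isCycle_of_isSubwalk hind hw hq hxy hwx hwy
  · exact hP.exists_isInduced_isCycle_of_isSubwalk hind hw hq hxy.symm hwy hwx

end SimpleGraph.Walk

section Matching

variable {V : Type} [DecidableEq V] {S : Finset V} {f : V → V}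

theorem indepEdges_image_mk (hf : Set.InjOn f S) (hfS : ∀ u ∈ S, f u ∉ S) :
    IndepEdges (S.image fun u => s(u, f u)) := by
  simp only [IndepEdges, Finset.mem_image]
  rintro _ ⟨u, hu, rfl⟩ _ ⟨u', hu', rfl⟩ hne x hx hx'
  rw [Sym2.mem_iff] at hx hx'
  rcases hx with rfl | rfl <;> rcases hx' with h | h
  · exact hne (by rw [h])
  · exact hfS u' hu' (h ▸ hu)
  · exact hfS u hu (h ▸ hu')
  · exact hne (by rw [hf hu hu' h])

theorem card_image_mk (hfS : ∀ u ∈ S, f u ∉ S) :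
    (S.image fun u => s(u, f u)).card = S.card := by
  refine Finset.card_image_of_injOn fun u hu u' hu' h => ?_
  rcases Sym2.eq_iff.mp h with ⟨h, -⟩ | ⟨h, -⟩
  · exact h
  · exact absurd (h ▸ hu) (hfS u' hu')

theorem exists_ne_map_eq_of_indepEdges_card_le {E : Finset (Sym2 V)} {t : ℕ}
    (hmatch : ∀ M ⊆ E, IndepEdges M → M.card ≤ t) (hS : t < S.card)
    (hfE : ∀ u ∈ S, s(u, f u) ∈ E) (hfS : ∀ u ∈ S, f u ∉ S) :
    ∃ x ∈ S, ∃ y ∈ S, x ≠ y ∧ f x = f y := by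
  by_contra! hf
  have hinj : Set.InjOn f S := fun x hx y hy h => by_contra fun hxy => hf x hx y hy hxy h
  have hME : (S.image fun u => s(u, f u)) ⊆ E := fun e he => by
    obtain ⟨u, hu, rfl⟩ := Finset.mem_image.mp he
    exact hfE u hu
  have := hmatch _ hME (indepEdges_image_mk hinj hfS)
  rw [card_image_mk hfS] at this
  omega

end Matching

open SimpleGraph Walk

theorem chordless_iff_isInduced {V : Type} {G : SimpleGraph V} {v : V} {C : G.Walk v v} :
    Chordless G C ↔ C.IsInduced := by
  refine ⟨fun h x y hx hy hxy => ?_, fun h e ⟨he, heC, hsupp⟩ => ?_⟩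
  · by_contra heC
    refine h s(x, y) ⟨hxy, heC, fun z hz => ?_⟩
    rcases Sym2.mem_iff.mp hz with rfl | rfl <;> assumption
  · induction e using Sym2.ind with
    | _ x y => exact heC (h (hsupp x (Sym2.mem_mk_left x y)) (hsupp y (Sym2.mem_mk_right x y)) he)

theorem hval_le_hval {V : Type} [DecidableEq V] {G : SimpleGraph V} {v w : V}
    {C : G.Walk v v} {C' : G.Walk w w}
    (h : ∀ z ∈ C'.support, z ≠ w → z ∈ C.support ∧ z ≠ v) : hval G C' ≤ hval G C :=
  Finset.sum_le_sum_of_subset fun z hz => by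
    simp only [Finset.mem_erase, List.mem_toFinset] at hz ⊢
    exact (h z hz.2 hz.1).symm

theorem Finset.exists_subset_forall_card_le_card_add {α : Type*} {s : Finset α} {p : α → Prop}
    {B : Set α} {k : ℕ} (hk : B.ncard ≤ k) (hB : B.Finite)
    (h : ∀ x ∈ s, ¬ p x → x ∈ B) :
    ∃ S ⊆ s, (∀ x ∈ S, p x) ∧ s.card ≤ S.card + k := by
  classical
  refine ⟨s.filter p, filter_subset _ _, fun x hx => (mem_filter.mp hx).2, ?_⟩
  rw [← card_filter_add_card_filter_not p (s := s)]
  gcongr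
  rw [← Set.ncard_coe_finset]
  exact (Set.ncard_le_ncard (fun x hx => h x (mem_filter.mp hx).1 (mem_filter.mp hx).2) hB).trans hk

theorem shorten_cycle_general {V : Type} [DecidableEq V]
    (G : SimpleGraph V) (hdeg : ∀ u : V, 3 ≤ deg G u)
    (t' : ℕ) (E : Finset (Sym2 V))
    (hmatch : ∀ M ⊆ E, IndepEdges M → M.card ≤ t')
    (v : V) (C : G.Walk v v) (hC : C.IsCycle) (hchord : Chordless G C)
    (hcover : {z : V | z ∈ C.support ∧ z ≠ v ∧
      ¬ (∀ g ∈ G.edgeSet, g ∉ C.edges → z ∈ g → g ∈ E)}.ncard ≤ 4)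
    (hlen : t' + 6 < C.length) :
    ∃ (v' : V) (C' : G.Walk v' v'), C'.IsCycle ∧ Chordless G C' ∧
      C'.length ≤ t' + 6 ∧ hval G C' ≤ hval G C := by
  classical
  have hind := chordless_iff_isInduced.mp hchord
  obtain ⟨a, b, P, hP, hPind, hPlen, hPC, hvP⟩ :=
    hC.exists_isInduced_isPath hind (n := t' + 4) (by omega)
  obtain ⟨S, hSP, hgood, hS⟩ := Finset.exists_subset_forall_card_le_card_add
    (s := P.support.toFinset) (p := fun z => ∀ g ∈ G.edgeSet, g ∉ C.edges → z ∈ g → g ∈ E)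
    hcover (C.support.toFinset.finite_toSet.subset fun z hz => List.mem_toFinset.mpr hz.1)
    fun z hz hbad => have hz := List.mem_toFinset.mp hz; ⟨hPC hz, fun h => hvP (h ▸ hz), hbad⟩
  rw [List.toFinset_card_of_nodup hP.support_nodup, length_support, hPlen] at hS
  replace hSP (u : V) (hu : u ∈ S) : u ∈ P.support := List.mem_toFinset.mp (hSP hu)
  have hout (u : V) (hu : u ∈ S) : ∃ y, G.Adj u y ∧ y ∉ C.support ∧ s(u, y) ∈ E := by
    obtain ⟨y, huy, hyC, hy⟩ := hC.exists_adj_notMem_support hind (hPC (hSP u hu)) (hdeg u)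
    exact ⟨y, huy, hy, hgood u hu _ huy hyC (Sym2.mem_mk_left _ _)⟩
  choose! f hfadj hfC hfE using hout
  obtain ⟨x, hx, y, hy, hxy, hfxy⟩ := exists_ne_map_eq_of_indepEdges_card_le hmatch (by omega)
    hfE fun u hu hfu => hfC u hu (hPC (hSP _ hfu))
  obtain ⟨C', hC', hC'ind, hC'len, hC'supp⟩ :=
    hP.exists_isInduced_isCycle_of_adj hPind (fun h => hfC x hx (hPC h)) (hSP x hx) (hSP y hy)
      hxy (hfadj x hx).symm (hfxy ▸ (hfadj y hy).symm)
  refine ⟨f x, C', hC', chordless_iff_isInduced.mpr hC'ind, by omega,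
    hval_le_hval fun z hz hzx => ?_⟩
  have hzP := (List.mem_cons.mp (hC'supp hz)).resolve_left hzx
  exact ⟨hPC hzP, fun h => hvP (h ▸ hzP)⟩

/-- Let `G` be simple with min degree `≥ 3`, `E` a set of
edges containing at most `t'` independent edges, and `C` a chordless cycle
with special vertex `v` such that all but at most `4` non-special vertices of
`C` have all their hanging edges in `E`. If `l(C) > t' + 6`, then `G` has a
chordless cycle `C'` with a special vertex such that `l(C') ≤ t' + 6` and
`h(C') ≤ h(C)`. -/
theorem shorten_cycle {V : Type} [Fintype V] [DecidableEq V]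
    (G : SimpleGraph V) (hdeg : ∀ u : V, 3 ≤ deg G u)
    (t' : ℕ) (E : Finset (Sym2 V)) (hE : ↑E ⊆ G.edgeSet)
    (hmatch : ∀ M ⊆ E, IndepEdges M → M.card ≤ t')
    (v : V) (C : G.Walk v v) (hC : C.IsCycle) (hchord : Chordless G C)
    (hcover : {z : V | z ∈ C.support ∧ z ≠ v ∧
      ¬ (∀ g ∈ G.edgeSet, g ∉ C.edges → z ∈ g → g ∈ E)}.ncard ≤ 4)
    (hlen : t' + 6 < C.length) :
    ∃ (v' : V) (C' : G.Walk v' v'), C'.IsCycle ∧ Chordless G C' ∧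
      C'.length ≤ t' + 6 ∧ hval G C' ≤ hval G C :=
  shorten_cycle_general G hdeg t' E hmatch v C hC hchord hcover hlen
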